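/- arXiv:2106.11479 — 2 statements merged into one kernel-verified Lean document; each statement's English description precedes it below -/
import Mathlib

section
/- Let n ≥ 1. Suppose that to every n-tuple K = (k_1, …, k_n) of ℝ-linearly independent vectors in S^{n−1} ⊆ ℝ^n there are assigned positive real numbers ε_{K,2}, …, ε_{K,n}. For such a tuple K, let σ_K ⊆ ℝ^n be the cone of all nonnegative linear combinations of the n vectors v_{K,1} := k_1 and v_{K,u} := k_1 + Σ_{i=2}^{u} (∏_{j=2}^{i} ε_{K,j}) k_i for 2 ≤ u ≤ n. Then there exist finitely many such tuples K_1, …, K_r with ℝ^n = σ_{K_1} ∪ ⋯ ∪ σ_{K_r}. -/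
open Module Finset

noncomputable section

/-- cone vectors -/
def vc {W : Type} [AddCommGroup W] [Module ℝ W] (e : ℕ → ℝ) (K : ℕ → W) (u : ℕ) : W :=
  K 1 + ∑ i ∈ Finset.Icc 2 u, (∏ j ∈ Finset.Icc 2 i, e j) • K i

lemma Icc_bot_split (a b : ℕ) (h : a ≤ b) :
    Finset.Icc a b = insert a (Finset.Icc (a+1) b) := by
  ext x; simp only [Finset.mem_Icc, Finset.mem_insert]; omega

lemma not_mem_Icc_succ (a b : ℕ) : a ∉ Finset.Icc (a+1) b := by
  simp

lemma prod_Icc_shift {M : Type*} [CommMonoid M] (f : ℕ → M) (a b : ℕ) :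
    ∏ i ∈ Finset.Icc (a+1) (b+1), f i = ∏ i ∈ Finset.Icc a b, f (i+1) := by
  rw [← Finset.map_add_right_Icc a b 1, Finset.prod_map]
  rfl

lemma sum_Icc_shift {M : Type*} [AddCommMonoid M] (f : ℕ → M) (a b : ℕ) :
    ∑ i ∈ Finset.Icc (a+1) (b+1), f i = ∑ i ∈ Finset.Icc a b, f (i+1) := by
  rw [← Finset.map_add_right_Icc a b 1, Finset.sum_map]
  rfl

lemma sum_Icc_one_eq_range {M : Type*} [AddCommMonoid M] (f : ℕ → M) (n : ℕ) :
    ∑ u ∈ Finset.Icc 1 n, f u = ∑ i ∈ Finset.range n, f (i+1) := by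
  induction n with
  | zero => simp
  | succ n ih =>
      rw [Finset.sum_Icc_succ_top (by omega), ih, Finset.sum_range_succ]

lemma sum_Icc_one_eq_fin {M : Type*} [AddCommMonoid M] (f : ℕ → M) (n : ℕ) :
    ∑ u ∈ Finset.Icc 1 n, f u = ∑ u : Fin n, f ((u : ℕ)+1) := by
  rw [sum_Icc_one_eq_range, Fin.sum_univ_eq_sum_range (fun i => f (i+1)) n]

/-- every `K m`, `1 ≤ m ≤ n`, lies in the span of the cone vectors -/
lemma span_vcone {W : Type} [AddCommGroup W] [Module ℝ W] {n : ℕ}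
    (K : ℕ → W) (e : ℕ → ℝ) (he : ∀ j, 0 < e j) :
    ∀ m, 1 ≤ m → m ≤ n →
      K m ∈ Submodule.span ℝ (Set.range (fun u : Fin n => vc e K ((u : ℕ)+1))) := by
  intro m hm1 hmn
  have hmem : ∀ m', 1 ≤ m' → m' ≤ n →
      vc e K m' ∈ Submodule.span ℝ (Set.range (fun u : Fin n => vc e K ((u : ℕ)+1))) := by
    intro m' h1 h2
    apply Submodule.subset_span
    exact ⟨⟨m' - 1, by omega⟩, by simp; congr 1; omega⟩
  rcases Nat.lt_or_ge m 2 with h2 | h2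
  · have hm : m = 1 := by omega
    subst hm
    have : vc e K 1 = K 1 := by simp [vc]
    rw [← this]; exact hmem 1 le_rfl hmn
  · -- m ≥ 2 : c m • K m = vc m - vc (m-1)
    obtain ⟨m', rfl⟩ : ∃ m'', m = m'' + 1 := ⟨m - 1, by omega⟩
    set c : ℝ := ∏ j ∈ Finset.Icc 2 (m'+1), e j with hc
    have hcpos : 0 < c := Finset.prod_pos (fun j _ => he j)
    have hstep : vc e K (m'+1) = vc e K m' + c • K (m'+1) := by
      unfold vc
      rw [Finset.sum_Icc_succ_top (by omega)]
      rw [add_assoc]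
    have hK : K (m'+1) = c⁻¹ • (vc e K (m'+1) - vc e K m') := by
      rw [hstep]
      rw [add_sub_cancel_left, smul_smul, inv_mul_cancel₀ (ne_of_gt hcpos), one_smul]
    rw [hK]
    exact Submodule.smul_mem _ _ (Submodule.sub_mem _
      (hmem (m'+1) (by omega) hmn) (hmem m' (by omega) (by omega)))

/-- coordinate-sum bound -/
lemma coord_bound {W : Type} [NormedAddCommGroup W] [InnerProductSpace ℝ W]
    [FiniteDimensional ℝ W] {n : ℕ} (hW : finrank ℝ W = n)
    (v : ℕ → W)
    (hspan : ⊤ ≤ Submodule.span ℝ (Set.range (fun u : Fin n => v ((u : ℕ)+1)))) :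
    ∃ C : ℝ, 0 ≤ C ∧ ∀ (μ : ℕ → ℝ) (z : W),
      z = ∑ u ∈ Finset.Icc 1 n, μ u • v u →
      ∑ u ∈ Finset.Icc 1 n, μ u ≤ C * ‖z‖ := by
  have hcard : Fintype.card (Fin n) = finrank ℝ W := by simp [hW]
  let b : Basis (Fin n) ℝ W := basisOfTopLeSpanOfCardEqFinrank _ hspan hcard
  have hb : ∀ u : Fin n, b u = v ((u : ℕ)+1) := by
    intro u
    rw [show b = basisOfTopLeSpanOfCardEqFinrank _ hspan hcard from rfl,
      coe_basisOfTopLeSpanOfCardEqFinrank]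
  let L : W →ₗ[ℝ] ℝ := ∑ u : Fin n, b.coord u
  let Lc : W →L[ℝ] ℝ := LinearMap.toContinuousLinearMap L
  refine ⟨‖Lc‖, norm_nonneg _, ?_⟩
  intro μ z hz
  have hz' : z = ∑ u : Fin n, μ ((u : ℕ)+1) • b u := by
    rw [hz, sum_Icc_one_eq_fin]
    exact Finset.sum_congr rfl (fun u _ => by rw [hb])
  have hcoord : ∀ u : Fin n, b.coord u z = μ ((u : ℕ)+1) := by
    intro u
    rw [hz']
    simp [Basis.coord_apply, map_sum, Finsupp.single_apply]
  have hL : L z = ∑ u ∈ Finset.Icc 1 n, μ u := by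
    rw [sum_Icc_one_eq_fin]
    simp only [L, LinearMap.coe_sum, Finset.sum_apply]
    exact Finset.sum_congr rfl fun u _ => hcoord u
  calc ∑ u ∈ Finset.Icc 1 n, μ u = L z := hL.symm
    _ = Lc z := rfl
    _ ≤ |Lc z| := le_abs_self _
    _ = ‖Lc z‖ := (Real.norm_eq_abs _).symm
    _ ≤ ‖Lc‖ * ‖z‖ := Lc.le_opNorm z

end

open RealInnerProductSpace in
theorem aux (n : ℕ) : ∀ (V : Type) [NormedAddCommGroup V] [InnerProductSpace ℝ V]
    [FiniteDimensional ℝ V], finrank ℝ V = n →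
    ∀ (ε : (ℕ → V) → ℕ → ℝ), (∀ K j, 0 < ε K j) →
    ∃ s : Finset (ℕ → V),
      (∀ K ∈ s, LinearIndependent ℝ (fun i : Fin n => K ((i : ℕ) + 1)) ∧
        ∀ i, 1 ≤ i → i ≤ n → ‖K i‖ = 1) ∧
      ∀ x : V, ∃ K ∈ s, ∃ lam : ℕ → ℝ, (∀ u, 0 ≤ lam u) ∧
        x = ∑ u ∈ Finset.Icc 1 n, lam u • vc (ε K) K u := by
  induction n with
  | zero =>
    intro V _ _ _ hdim ε hε
    classical
    refine ⟨{fun _ => 0}, ?_, ?_⟩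
    · intro K _
      refine ⟨linearIndependent_empty_type, ?_⟩
      intro i h1 h0; omega
    · intro x
      haveI : Subsingleton V := finrank_zero_iff.mp hdim
      exact ⟨fun _ => 0, Finset.mem_singleton_self _, fun _ => 0, fun u => le_rfl, by
        simp [Subsingleton.elim x 0]⟩
  | succ n IH =>
    intro V _ _ _ hdim ε hε
    classical
    -- local covering around each unit vector
    have key : ∀ k₀ : V, ‖k₀‖ = 1 → ∃ (sl : Finset (ℕ → V)) (M : ℝ),
        (∀ K ∈ sl, LinearIndependent ℝ (fun i : Fin (n+1) => K ((i : ℕ) + 1)) ∧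
          ∀ i, 1 ≤ i → i ≤ n+1 → ‖K i‖ = 1) ∧
        ∀ x : V, M * ‖x - ⟪k₀, x⟫ • k₀‖ < ⟪k₀, x⟫ →
          ∃ K ∈ sl, ∃ lam : ℕ → ℝ, (∀ u, 0 ≤ lam u) ∧
            x = ∑ u ∈ Finset.Icc 1 (n+1), lam u • vc (ε K) K u := by
      intro k₀ hk₀
      have hk₀0 : k₀ ≠ 0 := by
        intro h; rw [h, norm_zero] at hk₀; norm_num at hk₀
      haveI : Fact (finrank ℝ V = n + 1) := ⟨hdim⟩
      set W := (Submodule.span ℝ {k₀})ᗮ with hWdef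
      have hW : finrank ℝ W = n := Submodule.finrank_orthogonal_span_singleton hk₀0
      set lift : (ℕ → W) → (ℕ → V) := fun K' m => if m = 1 then k₀ else ((K' (m-1) : V))
        with hlift
      set ε' : (ℕ → W) → ℕ → ℝ := fun K' j => ε (lift K') (j+1) with hε'
      have hε'pos : ∀ K' j, 0 < ε' K' j := fun K' j => hε _ _
      obtain ⟨s', hadm', hcov'⟩ := IH W hW ε' hε'pos
      have hK1 : ∀ K' : ℕ → W, lift K' 1 = k₀ := by intro K'; simp [hlift]
      have hKm : ∀ (K' : ℕ → W) m, 2 ≤ m → lift K' m = ((K' (m-1) : V)) := by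
        intro K' m hm; simp only [hlift]; rw [if_neg (by omega)]
      -- admissibility of lifted tuples
      have hadm : ∀ K' ∈ s', (LinearIndependent ℝ (fun i : Fin (n+1) => lift K' ((i : ℕ) + 1)) ∧
          ∀ i, 1 ≤ i → i ≤ n+1 → ‖lift K' i‖ = 1) := by
        intro K' hK'
        obtain ⟨hind, hnorm⟩ := hadm' K' hK'
        constructor
        · have heq : (fun i : Fin (n+1) => lift K' ((i : ℕ) + 1)) =
              Fin.cons k₀ (fun i : Fin n => ((K' ((i : ℕ)+1) : V))) := by
            funext i
            refine Fin.cases ?_ ?_ i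
            · simpa using hK1 K'
            · intro j
              rw [Fin.cons_succ]
              rw [show ((j.succ : Fin (n+1)) : ℕ) + 1 = ((j : ℕ) + 1) + 1 by simp]
              rw [hKm K' _ (by omega)]
              simp
          rw [heq, linearIndependent_fin_cons]
          constructor
          · exact hind.map' W.subtype (Submodule.ker_subtype W)
          · intro hmem
            have hsub : Submodule.span ℝ (Set.range fun i : Fin n => ((K' ((i:ℕ)+1) : V))) ≤ W := by
              rw [Submodule.span_le]
              rintro _ ⟨i, rfl⟩
              exact (K' ((i:ℕ)+1)).2
            have h0 : (⟪k₀, k₀⟫ : ℝ) = 0 :=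
              Submodule.inner_right_of_mem_orthogonal
                (Submodule.mem_span_singleton_self k₀) (hsub hmem)
            rw [real_inner_self_eq_norm_sq, hk₀] at h0
            norm_num at h0
        · intro i h1 h2
          rcases Nat.lt_or_ge i 2 with h | h
          · have : i = 1 := by omega
            rw [this, hK1 K', hk₀]
          · rw [hKm K' i h, ← Submodule.coe_norm]
            exact hnorm (i-1) (by omega) (by omega)
      -- uniform coordinate bound
      have hch : ∀ K' : ℕ → W, ∃ C : ℝ, 0 ≤ C ∧ (K' ∈ s' → ∀ (μ : ℕ → ℝ) (z : W),
          z = ∑ u ∈ Finset.Icc 1 n, μ u • vc (ε' K') K' u →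
          ∑ u ∈ Finset.Icc 1 n, μ u ≤ C * ‖z‖) := by
        intro K'
        by_cases hK' : K' ∈ s'
        · have hspan : ⊤ ≤ Submodule.span ℝ
              (Set.range (fun u : Fin n => vc (ε' K') K' ((u : ℕ)+1))) := by
            rcases Nat.eq_zero_or_pos n with h0 | hpos
            · intro x _
              haveI : Subsingleton W := finrank_zero_iff.mp (h0 ▸ hW)
              rw [Subsingleton.elim x 0]
              exact Submodule.zero_mem _
            · haveI : Nonempty (Fin n) := ⟨⟨0, hpos⟩⟩
              have hKspan := (hadm' K' hK').1.span_eq_top_of_card_eq_finrank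
                (by simp [hW])
              rw [← hKspan, Submodule.span_le]
              rintro _ ⟨i, rfl⟩
              exact span_vcone K' (ε' K') (hε'pos K') ((i:ℕ)+1) (by omega) (by omega)
          obtain ⟨C, hC0, hC⟩ := coord_bound hW (vc (ε' K') K') hspan
          exact ⟨C, hC0, fun _ => hC⟩
        · exact ⟨0, le_rfl, fun h => absurd h hK'⟩
      choose Cf hCf0 hCf using hch
      set M : ℝ := ∑ K' ∈ s', Cf K' / ε' K' 1 with hM
      have hMterm : ∀ K' ∈ s', Cf K' / ε' K' 1 ≤ M :=
        fun K' hK' => Finset.single_le_sum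
          (fun i _ => div_nonneg (hCf0 i) (le_of_lt (hε'pos i 1))) hK'
      refine ⟨s'.image lift, M, ?_, ?_⟩
      · intro K hK
        obtain ⟨K', hK', rfl⟩ := Finset.mem_image.mp hK
        exact hadm K' hK'
      -- coverage
      intro x hx
      set sx : ℝ := ⟪k₀, x⟫ with hsx
      set z₀ : V := x - sx • k₀ with hz₀
      have hz₀W : z₀ ∈ W := by
        rw [hWdef, Submodule.mem_orthogonal_singleton_iff_inner_right]
        rw [hz₀, inner_sub_right, real_inner_smul_right, real_inner_self_eq_norm_sq, hk₀]
        simp [hsx]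
      obtain ⟨K', hK', μ, hμ0, hzeq⟩ := hcov' ⟨z₀, hz₀W⟩
      set ε₂ : ℝ := ε' K' 1 with hε₂
      have hε₂pos : 0 < ε₂ := hε'pos K' 1
      set Sμ : ℝ := ∑ u ∈ Finset.Icc 1 n, μ u with hSμ
      have hznorm : ‖(⟨z₀, hz₀W⟩ : W)‖ = ‖z₀‖ := rfl
      have hSb : Sμ ≤ Cf K' * ‖z₀‖ := by
        rw [← hznorm]; exact hCf K' hK' μ _ hzeq
      have hb2 : Sμ / ε₂ ≤ M * ‖z₀‖ := by
        calc Sμ / ε₂ ≤ (Cf K' * ‖z₀‖) / ε₂ := by gcongr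
          _ = (Cf K' / ε₂) * ‖z₀‖ := by ring
          _ ≤ M * ‖z₀‖ := mul_le_mul_of_nonneg_right (hMterm K' hK') (norm_nonneg _)
      have hlam1nn : 0 ≤ sx - Sμ / ε₂ := by
        have h1 : M * ‖z₀‖ < sx := hx
        linarith
      set lam : ℕ → ℝ := fun u => if u = 1 then sx - Sμ / ε₂ else
        if 2 ≤ u ∧ u ≤ n+1 then μ (u-1) / ε₂ else 0 with hlamdef
      refine ⟨lift K', Finset.mem_image_of_mem _ hK', lam, ?_, ?_⟩
      · intro u
        simp only [hlamdef]
        split_ifs with h1 h2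
        · exact hlam1nn
        · exact div_nonneg (hμ0 _) hε₂pos.le
        · exact le_rfl
      -- the main identity
      have h22 : (∏ j ∈ Finset.Icc 2 2, ε (lift K') j) = ε₂ := by
        rw [hε₂, hε']
        simp
      have hvshift : ∀ u, 1 ≤ u → u ≤ n →
          vc (ε (lift K')) (lift K') (u+1) = k₀ + ε₂ • ((vc (ε' K') K' u : W) : V) := by
        intro u hu1 hun
        show lift K' 1 + _ = _
        rw [hK1 K']
        congr 1
        rw [Icc_bot_split 2 (u+1) (by omega), Finset.sum_insert (not_mem_Icc_succ 2 (u+1))]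
        have hshift : ∑ i ∈ Finset.Icc (2+1) (u+1), (∏ j ∈ Finset.Icc 2 i, ε (lift K') j) • lift K' i
            = ∑ i ∈ Finset.Icc 2 u, (ε₂ * ∏ j ∈ Finset.Icc 2 i, ε' K' j) • ((K' i : V)) := by
          rw [sum_Icc_shift]
          refine Finset.sum_congr rfl ?_
          intro i hi
          rw [Finset.mem_Icc] at hi
          have hprod : (∏ j ∈ Finset.Icc 2 (i+1), ε (lift K') j)
              = ε₂ * ∏ j ∈ Finset.Icc 2 i, ε' K' j := by
            rw [Icc_bot_split 2 (i+1) (by omega),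
              Finset.prod_insert (not_mem_Icc_succ 2 (i+1)), prod_Icc_shift]
          rw [hprod, hKm K' (i+1) (by omega)]
          simp
        have hcoe : ((vc (ε' K') K' u : W) : V)
            = ((K' 1 : W) : V)
              + ∑ i ∈ Finset.Icc 2 u, (∏ j ∈ Finset.Icc 2 i, ε' K' j) • ((K' i : W) : V) := by
          unfold vc
          push_cast
          rfl
        rw [hshift, h22, hKm K' 2 le_rfl, hcoe, smul_add, Finset.smul_sum]
        have h21 : (2:ℕ) - 1 = 1 := rfl
        rw [h21]
        exact congrArg (fun t => ε₂ • ((K' 1 : W) : V) + t)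
          (Finset.sum_congr rfl (fun i _ => (smul_smul _ _ _).symm))
      have hxdecomp : x = sx • k₀ + z₀ := by rw [hz₀]; abel
      symm
      have hsplit : ∑ u ∈ Finset.Icc 1 (n+1), lam u • vc (ε (lift K')) (lift K') u
          = lam 1 • vc (ε (lift K')) (lift K') 1
            + ∑ u ∈ Finset.Icc (1+1) (n+1), lam u • vc (ε (lift K')) (lift K') u := by
        rw [Icc_bot_split 1 (n+1) (by omega), Finset.sum_insert (not_mem_Icc_succ 1 (n+1))]
      rw [hsplit, sum_Icc_shift]
      have hv1 : vc (ε (lift K')) (lift K') 1 = k₀ := by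
        unfold vc
        rw [hK1 K']
        simp
      have hterm : ∀ u ∈ Finset.Icc 1 n, lam (u+1) • vc (ε (lift K')) (lift K') (u+1)
          = (μ u / ε₂) • k₀ + μ u • ((vc (ε' K') K' u : W) : V) := by
        intro u hu
        rw [Finset.mem_Icc] at hu
        have hlamu : lam (u+1) = μ u / ε₂ := by
          simp only [hlamdef]
          rw [if_neg (by omega), if_pos (by omega)]
          simp
        rw [hlamu, hvshift u hu.1 hu.2, smul_add, smul_smul,
          div_mul_cancel₀ _ (ne_of_gt hε₂pos)]
      rw [Finset.sum_congr rfl hterm, Finset.sum_add_distrib, ← Finset.sum_smul, hv1]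
      have hsum2 : ∑ u ∈ Finset.Icc 1 n, μ u • ((vc (ε' K') K' u : W) : V) = z₀ := by
        have hcz : ((⟨z₀, hz₀W⟩ : W) : V) = z₀ := rfl
        rw [← hcz, hzeq]
        push_cast
        rfl
      have hlam1v : lam 1 = sx - Sμ / ε₂ := by simp [hlamdef]
      have hsumdiv : (∑ u ∈ Finset.Icc 1 n, μ u / ε₂) = Sμ / ε₂ := by
        rw [hSμ, Finset.sum_div]
      rw [hsum2, hlam1v, hsumdiv, hxdecomp, ← add_assoc, ← add_smul, sub_add_cancel]
    -- choice over unit vectors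
    have hexists : ∀ k₀ : V, ∃ (sl : Finset (ℕ → V)) (M : ℝ),
        ‖k₀‖ = 1 → ((∀ K ∈ sl, LinearIndependent ℝ (fun i : Fin (n+1) => K ((i : ℕ) + 1)) ∧
          ∀ i, 1 ≤ i → i ≤ n+1 → ‖K i‖ = 1) ∧
        ∀ x : V, M * ‖x - ⟪k₀, x⟫ • k₀‖ < ⟪k₀, x⟫ →
          ∃ K ∈ sl, ∃ lam : ℕ → ℝ, (∀ u, 0 ≤ lam u) ∧
            x = ∑ u ∈ Finset.Icc 1 (n+1), lam u • vc (ε K) K u) := by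
      intro k₀
      by_cases h : ‖k₀‖ = 1
      · obtain ⟨sl, M, h1, h2⟩ := key k₀ h
        exact ⟨sl, M, fun _ => ⟨h1, h2⟩⟩
      · exact ⟨∅, 0, fun hh => absurd hh h⟩
    choose sF MF hF using hexists
    set U : V → Set V := fun k₀ => {x | MF k₀ * ‖x - ⟪k₀, x⟫ • k₀‖ < ⟪k₀, x⟫} with hU
    have hUopen : ∀ k₀ : V, IsOpen (U k₀) := by
      intro k₀
      apply isOpen_lt
      · exact continuous_const.mul
          ((continuous_id.sub ((continuous_const.inner continuous_id).smul
            continuous_const)).norm)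
      · exact continuous_const.inner continuous_id
    have hcover : Metric.sphere (0:V) 1 ⊆ ⋃ k₀ : Metric.sphere (0:V) 1, U (k₀ : V) := by
      intro y hy
      have hy1 : ‖y‖ = 1 := by rwa [mem_sphere_zero_iff_norm] at hy
      refine Set.mem_iUnion.mpr ⟨⟨y, hy⟩, ?_⟩
      simp only [hU, Set.mem_setOf_eq]
      rw [real_inner_self_eq_norm_sq, hy1]
      simp
    obtain ⟨t, ht⟩ := (isCompact_sphere (0:V) 1).elim_finite_subcover
      (fun k₀ : Metric.sphere (0:V) 1 => U (k₀ : V)) (fun _ => hUopen _) hcover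
    have hsphere_norm : ∀ k₀ : Metric.sphere (0:V) 1, ‖(k₀ : V)‖ = 1 :=
      fun k₀ => mem_sphere_zero_iff_norm.mp k₀.2
    refine ⟨t.biUnion (fun k₀ => sF (k₀ : V)), ?_, ?_⟩
    · intro K hK
      obtain ⟨k₀, _, hKs⟩ := Finset.mem_biUnion.mp hK
      exact (hF (k₀ : V) (hsphere_norm k₀)).1 K hKs
    · intro x
      have hcov_unit : ∀ y : V, ‖y‖ = 1 → ∃ K ∈ t.biUnion (fun k₀ => sF (k₀ : V)),
          ∃ lam : ℕ → ℝ, (∀ u, 0 ≤ lam u) ∧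
          y = ∑ u ∈ Finset.Icc 1 (n+1), lam u • vc (ε K) K u := by
        intro y hy1
        have hyS : y ∈ Metric.sphere (0:V) 1 := by rwa [mem_sphere_zero_iff_norm]
        obtain ⟨k₀, hk₀t, hyU⟩ := Set.mem_iUnion₂.mp (ht hyS)
        obtain ⟨K, hKs, lam, hlam, heq⟩ := (hF (k₀ : V) (hsphere_norm k₀)).2 y hyU
        exact ⟨K, Finset.mem_biUnion.mpr ⟨k₀, hk₀t, hKs⟩, lam, hlam, heq⟩
      have hV1 : 0 < finrank ℝ V := by omega
      haveI : Nontrivial V := finrank_pos_iff.mp hV1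
      by_cases hx0 : x = 0
      · obtain ⟨v, hv⟩ := exists_ne (0 : V)
        have hvn : ‖v‖ ≠ 0 := norm_ne_zero_iff.mpr hv
        have hy1 : ‖(‖v‖⁻¹ • v)‖ = 1 := by
          rw [norm_smul, norm_inv, norm_norm, inv_mul_cancel₀ hvn]
        obtain ⟨K, hKmem, _, _, _⟩ := hcov_unit _ hy1
        refine ⟨K, hKmem, fun _ => 0, fun u => le_rfl, ?_⟩
        rw [hx0]
        simp
      · have hxn : ‖x‖ ≠ 0 := norm_ne_zero_iff.mpr hx0
        have hy1 : ‖(‖x‖⁻¹ • x)‖ = 1 := by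
          rw [norm_smul, norm_inv, norm_norm, inv_mul_cancel₀ hxn]
        obtain ⟨K, hKmem, lam, hlam, heq⟩ := hcov_unit _ hy1
        refine ⟨K, hKmem, fun u => ‖x‖ * lam u, fun u => mul_nonneg (norm_nonneg x) (hlam u), ?_⟩
        calc x = ‖x‖ • (‖x‖⁻¹ • x) := by
              rw [smul_smul, mul_inv_cancel₀ hxn, one_smul]
          _ = ‖x‖ • ∑ u ∈ Finset.Icc 1 (n+1), lam u • vc (ε K) K u := by rw [← heq]
          _ = ∑ u ∈ Finset.Icc 1 (n+1), (‖x‖ * lam u) • vc (ε K) K u := by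
              rw [Finset.smul_sum]
              exact Finset.sum_congr rfl (fun u _ => by rw [smul_smul])


/-- Let `n ≥ 1`. Suppose to every `n`-tuple `K = (k₁, …, k_n)` of
`ℝ`-linearly independent unit vectors in `S^{n-1} ⊆ ℝ^n` there are assigned positive
reals `ε_{K,2}, …, ε_{K,n}`. For such `K` let `σ_K` be the cone of nonnegative linear
combinations of the vectors `v_{K,1} = k₁` and
`v_{K,u} = k₁ + Σ_{i=2}^u (∏_{j=2}^i ε_{K,j}) k_i` for `2 ≤ u ≤ n`.
Then finitely many such cones cover `ℝ^n`.
(Tuples are modelled as functions `ℕ → EuclideanSpace ℝ (Fin n)` whose values at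
`1, …, n` are the entries `k₁, …, k_n`.) -/
theorem stmt_1 (n : ℕ) (hn : 1 ≤ n)
    (ε : (ℕ → EuclideanSpace ℝ (Fin n)) → ℕ → ℝ)
    (hε : ∀ K : ℕ → EuclideanSpace ℝ (Fin n),
      (LinearIndependent ℝ (fun i : Fin n => K ((i : ℕ) + 1)) ∧
        ∀ i, 1 ≤ i → i ≤ n → ‖K i‖ = 1) →
      ∀ j, 2 ≤ j → j ≤ n → 0 < ε K j) :
    ∃ (r : ℕ) (Ks : Fin r → (ℕ → EuclideanSpace ℝ (Fin n))),
      (∀ a, LinearIndependent ℝ (fun i : Fin n => Ks a ((i : ℕ) + 1)) ∧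
        ∀ i, 1 ≤ i → i ≤ n → ‖Ks a i‖ = 1) ∧
      ∀ x : EuclideanSpace ℝ (Fin n), ∃ (a : Fin r) (lam : ℕ → ℝ),
        (∀ u, 0 ≤ lam u) ∧
        x = ∑ u ∈ Finset.Icc 1 n, lam u •
          (Ks a 1 + ∑ i ∈ Finset.Icc 2 u,
            (∏ j ∈ Finset.Icc 2 i, ε (Ks a) j) • Ks a i) := by
  classical
  have hεapos : ∀ (K : ℕ → EuclideanSpace ℝ (Fin n)) (j : ℕ),
      0 < (if 2 ≤ j ∧ j ≤ n ∧ 0 < ε K j then ε K j else 1) := by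
    intro K j
    split_ifs with h
    · exact h.2.2
    · exact one_pos
  obtain ⟨s, hadm, hcov⟩ := aux n (EuclideanSpace ℝ (Fin n))
    finrank_euclideanSpace_fin
    (fun K j => if 2 ≤ j ∧ j ≤ n ∧ 0 < ε K j then ε K j else 1) hεapos
  refine ⟨s.card, fun a => (s.equivFin.symm a : ℕ → EuclideanSpace ℝ (Fin n)), ?_, ?_⟩
  · intro a
    exact hadm _ (s.equivFin.symm a).2
  · intro x
    obtain ⟨K, hKs, lam, hlam, heq⟩ := hcov x
    refine ⟨s.equivFin ⟨K, hKs⟩, lam, hlam, ?_⟩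
    simp only [Equiv.symm_apply_apply]
    rw [heq]
    refine Finset.sum_congr rfl ?_
    intro u hu
    rw [Finset.mem_Icc] at hu
    unfold vc
    congr 1
    congr 1
    refine Finset.sum_congr rfl ?_
    intro i hi
    rw [Finset.mem_Icc] at hi
    congr 1
    refine Finset.prod_congr rfl ?_
    intro j hj
    rw [Finset.mem_Icc] at hj
    show (if 2 ≤ j ∧ j ≤ n ∧ 0 < ε K j then ε K j else 1) = ε K j
    rw [if_pos ⟨hj.1, by omega, hε K (hadm K hKs) j hj.1 (by omega)⟩]
end

section
/- Let N = ℤ^n with dual lattice M = Hom(N, ℤ), let σ ⊆ N ⊗ ℝ be a strongly convex rational polyhedral cone, let σ^∨ ⊆ M ⊗ ℝ be its dual cone, and let S_σ := σ^∨ ∩ M. Consider ℝ ∪ {∞} as a commutative monoid under addition, with a + ∞ = ∞ for all a and neutral element 0. Then the map sending a pair (τ, ℓ), where τ is a face of σ and ℓ : M ∩ τ^⊥ → ℝ is a group homomorphism, to the function φ_{τ,ℓ} : S_σ → ℝ ∪ {∞} defined by φ_{τ,ℓ}(m) = ℓ(m) if m ∈ τ^⊥ and φ_{τ,ℓ}(m)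 = ∞ otherwise, is a bijection onto the set of monoid homomorphisms from (S_σ, +, 0) to (ℝ ∪ {∞}, +, 0). -/
open scoped Classical

noncomputable section

/-- The real pairing between `ℤ^n` (thought of as `M`) and `ℝ^n` (thought of as `N ⊗ ℝ`). -/
def dotIR {n : ℕ} (w : Fin n → ℤ) (x : Fin n → ℝ) : ℝ := ∑ i, (w i : ℝ) * x i

/-- `σ ⊆ ℝ^n` is a rational polyhedral cone: the set of nonnegative real combinations of
finitely many rational vectors. -/
def IsRatPolyCone {n : ℕ} (σ : Set (Fin n → ℝ)) : Prop :=
  ∃ (k : ℕ) (v : Fin k → Fin n → ℚ),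
    σ = {x | ∃ lam : Fin k → ℝ, (∀ u, 0 ≤ lam u) ∧
      x = ∑ u, lam u • fun i => ((v u i : ℝ))}

/-- `τ` is a face of the cone `σ`: the locus in `σ` where some linear functional that is
nonnegative on `σ` vanishes. -/
def IsFaceOf {n : ℕ} (τ σ : Set (Fin n → ℝ)) : Prop :=
  ∃ w : Fin n → ℝ, (∀ x ∈ σ, 0 ≤ ∑ i, w i * x i) ∧
    τ = {x | x ∈ σ ∧ ∑ i, w i * x i = 0}

/-- The monoid `S_σ = σ^∨ ∩ M` of lattice points of the dual cone, as an additive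
submonoid of `M = ℤ^n`. -/
def Ssigma {n : ℕ} (σ : Set (Fin n → ℝ)) : AddSubmonoid (Fin n → ℤ) where
  carrier := {w | ∀ x ∈ σ, 0 ≤ dotIR w x}
  zero_mem' := by
    intro x _
    simp [dotIR]
  add_mem' := by
    intro a b ha hb x hx
    have h : dotIR (a + b) x = dotIR a x + dotIR b x := by
      unfold dotIR
      rw [← Finset.sum_add_distrib]
      refine Finset.sum_congr rfl fun i _ => by simp only [Pi.add_apply]; push_cast; ring
    rw [h]
    exact add_nonneg (ha x hx) (hb x hx)

/-- The lattice part `M ∩ τ^⊥` of the annihilator of `τ`, as an additive subgroup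
of `M = ℤ^n`. -/
def Mperp {n : ℕ} (τ : Set (Fin n → ℝ)) : AddSubgroup (Fin n → ℤ) where
  carrier := {w | ∀ x ∈ τ, dotIR w x = 0}
  zero_mem' := by
    intro x _
    simp [dotIR]
  add_mem' := by
    intro a b ha hb x hx
    have h : dotIR (a + b) x = dotIR a x + dotIR b x := by
      unfold dotIR
      rw [← Finset.sum_add_distrib]
      refine Finset.sum_congr rfl fun i _ => by simp only [Pi.add_apply]; push_cast; ring
    rw [h, ha x hx, hb x hx, add_zero]
  neg_mem' := by
    intro a ha x hx
    have h : dotIR (-a) x = -dotIR a x := by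
      unfold dotIR
      rw [← Finset.sum_neg_distrib]
      refine Finset.sum_congr rfl fun i _ => by simp only [Pi.neg_apply]; push_cast; ring
    rw [h, ha x hx, neg_zero]

/-- The map sending a pair `(τ, ℓ)` — a face `τ` of `σ` together with a group homomorphism
`ℓ : M ∩ τ^⊥ → ℝ` — to the function `S_σ → ℝ ∪ {∞}` equal to `ℓ` on `τ^⊥` and to `∞`
elsewhere. -/
def toricBoundaryMap {n : ℕ} (σ : Set (Fin n → ℝ))
    (p : Σ τ : {τ : Set (Fin n → ℝ) // IsFaceOf τ σ}, (↥(Mperp τ.1) →+ ℝ)) :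
    ↥(Ssigma σ) → WithTop ℝ :=
  fun m =>
    if h : (m : Fin n → ℤ) ∈ Mperp p.1.1 then ((p.2 ⟨(m : Fin n → ℤ), h⟩ : ℝ) : WithTop ℝ)
    else ⊤

namespace Stmt8

variable {n k : ℕ}

/-- real dot product -/
def dotRR {n : ℕ} (w x : Fin n → ℝ) : ℝ := ∑ i, w i * x i

lemma dotRR_sum_right (w : Fin n → ℝ) (lam : Fin k → ℝ) (y : Fin k → Fin n → ℝ) :
    dotRR w (∑ u, lam u • y u) = ∑ u, lam u * dotRR w (y u) := by
  unfold dotRR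
  simp only [Finset.sum_apply, Pi.smul_apply, smul_eq_mul, Finset.mul_sum]
  rw [Finset.sum_comm]
  exact Finset.sum_congr rfl fun u _ => Finset.sum_congr rfl fun i _ => by ring

lemma dotRR_sum_left (c : Fin k → ℝ) (y : Fin k → Fin n → ℝ) (x : Fin n → ℝ) :
    dotRR (∑ u, c u • y u) x = ∑ u, c u * dotRR (y u) x := by
  unfold dotRR
  simp only [Finset.sum_apply, Pi.smul_apply, smul_eq_mul, Finset.sum_mul, Finset.mul_sum]
  rw [Finset.sum_comm]
  exact Finset.sum_congr rfl fun u _ => Finset.sum_congr rfl fun i _ => by ring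

lemma dotIR_eq_dotRR (m : Fin n → ℤ) (x : Fin n → ℝ) :
    dotIR m x = dotRR (fun i => (m i : ℝ)) x := rfl

lemma dotRR_add_left (a b x : Fin n → ℝ) : dotRR (a + b) x = dotRR a x + dotRR b x := by
  unfold dotRR
  rw [← Finset.sum_add_distrib]
  exact Finset.sum_congr rfl fun i _ => by simp [Pi.add_apply]; ring

/-- the cast of the `u`-th generator -/
def vR (v : Fin k → Fin n → ℚ) (u : Fin k) : Fin n → ℝ := fun i => (v u i : ℝ)

/-- the cone generated by `v` -/
def coneOf (v : Fin k → Fin n → ℚ) : Set (Fin n → ℝ) :=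
  {x | ∃ lam : Fin k → ℝ, (∀ u, 0 ≤ lam u) ∧ x = ∑ u, lam u • fun i => ((v u i : ℝ))}

lemma vR_mem_coneOf (v : Fin k → Fin n → ℚ) (u : Fin k) : vR v u ∈ coneOf v := by
  refine ⟨fun u' => if u' = u then 1 else 0, fun u' => by positivity, ?_⟩
  rw [Finset.sum_eq_single u]
  · simp only [if_true, eq_self_iff_true, one_smul]; rfl
  · intro b _ hb; simp [hb]
  · simp

lemma zero_mem_coneOf (v : Fin k → Fin n → ℚ) : (0 : Fin n → ℝ) ∈ coneOf v := by
  refine ⟨fun _ => 0, fun _ => le_refl _, ?_⟩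
  simp

/-- rational dot pairing of a lattice vector with a generator -/
def dotQ (v : Fin k → Fin n → ℚ) (m : Fin n → ℤ) (u : Fin k) : ℚ := ∑ i, (m i : ℚ) * v u i

lemma dotIR_vR (v : Fin k → Fin n → ℚ) (m : Fin n → ℤ) (u : Fin k) :
    dotIR m (vR v u) = ((dotQ v m u : ℚ) : ℝ) := by
  unfold dotIR dotQ vR
  push_cast
  rfl

lemma mem_Ssigma_iff (v : Fin k → Fin n → ℚ) (m : Fin n → ℤ) :
    m ∈ Ssigma (coneOf v) ↔ ∀ u, 0 ≤ dotIR m (vR v u) := by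
  constructor
  · intro hm u
    exact hm (vR v u) (vR_mem_coneOf v u)
  · intro h x hx
    obtain ⟨lam, hlam, rfl⟩ := hx
    rw [dotIR_eq_dotRR, dotRR_sum_right]
    exact Finset.sum_nonneg fun u _ => mul_nonneg (hlam u) (h u)

lemma dotIR_eq_zero_of_cone (v : Fin k → Fin n → ℚ) (m : Fin n → ℤ)
    (h : ∀ u, 0 ≤ dotIR m (vR v u)) {x : Fin n → ℝ} (hx : x ∈ coneOf v)
    (hx0 : dotIR m x = 0) : ∀ lam : Fin k → ℝ, (∀ u, 0 ≤ lam u) →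
      x = (∑ u, lam u • fun i => ((v u i : ℝ))) → ∀ u, lam u * dotIR m (vR v u) = 0 := by
  intro lam hlam hxe u
  have hsum : (0:ℝ) = ∑ u, lam u * dotIR m (vR v u) := by
    rw [← hx0, hxe, dotIR_eq_dotRR, dotRR_sum_right]; rfl
  have := (Finset.sum_eq_zero_iff_of_nonneg (fun u _ =>
    mul_nonneg (hlam u) (h u))).1 hsum.symm
  exact this u (Finset.mem_univ u)

end Stmt8
namespace Stmt8R

open Stmt8

variable {n k : ℕ}

/-- rational dot product -/
def dQQ {n : ℕ} (x y : Fin n → ℚ) : ℚ := ∑ i, x i * y i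

lemma dQQ_comm (x y : Fin n → ℚ) : dQQ x y = dQQ y x :=
  Finset.sum_congr rfl fun i _ => mul_comm _ _

lemma dotRR_comm (x y : Fin n → ℝ) : dotRR x y = dotRR y x :=
  Finset.sum_congr rfl fun i _ => mul_comm _ _

/-- cast of a rational vector to a real vector -/
def cQR {n : ℕ} (x : Fin n → ℚ) : Fin n → ℝ := fun i => (x i : ℝ)

lemma dQQ_cast (x y : Fin n → ℚ) : ((dQQ x y : ℚ) : ℝ) = dotRR (cQR x) (cQR y) := by
  unfold dQQ dotRR cQR
  push_cast
  rfl

/-- sum-linearity of `dQQ` in the left argument, over arbitrary finsets -/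
lemma dQQ_sum_left {α : Type*} (s : Finset α) (c : α → ℚ) (y : α → Fin n → ℚ) (x : Fin n → ℚ) :
    dQQ (∑ u ∈ s, c u • y u) x = ∑ u ∈ s, c u * dQQ (y u) x := by
  unfold dQQ
  simp only [Finset.sum_apply, Pi.smul_apply, smul_eq_mul, Finset.sum_mul, Finset.mul_sum]
  rw [Finset.sum_comm]
  exact Finset.sum_congr rfl fun u _ => Finset.sum_congr rfl fun i _ => by ring

/-- sum-linearity of `dotRR` in the left argument, over arbitrary finsets -/
lemma dotRR_sum_left' {α : Type*} (s : Finset α) (c : α → ℝ) (y : α → Fin n → ℝ)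
    (x : Fin n → ℝ) :
    dotRR (∑ u ∈ s, c u • y u) x = ∑ u ∈ s, c u * dotRR (y u) x := by
  unfold dotRR
  simp only [Finset.sum_apply, Pi.smul_apply, smul_eq_mul, Finset.sum_mul, Finset.mul_sum]
  rw [Finset.sum_comm]
  exact Finset.sum_congr rfl fun u _ => Finset.sum_congr rfl fun i _ => by ring

/-- the dot-product bilinear form over `ℚ` -/
def Bq (n : ℕ) : LinearMap.BilinForm ℚ (Fin n → ℚ) :=
  LinearMap.mk₂ ℚ (fun x y => dQQ x y)
    (fun a b y => by
      unfold dQQ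
      rw [← Finset.sum_add_distrib]
      exact Finset.sum_congr rfl fun i _ => by simp only [Pi.add_apply]; ring)
    (fun c a y => by
      unfold dQQ
      rw [Finset.smul_sum]
      exact Finset.sum_congr rfl fun i _ => by
        simp only [Pi.smul_apply, smul_eq_mul]; ring)
    (fun a b y => by
      unfold dQQ
      rw [← Finset.sum_add_distrib]
      exact Finset.sum_congr rfl fun i _ => by simp only [Pi.add_apply]; ring)
    (fun c a y => by
      unfold dQQ
      rw [Finset.smul_sum]
      exact Finset.sum_congr rfl fun i _ => by
        simp only [Pi.smul_apply, smul_eq_mul]; ring)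

lemma Bq_apply (x y : Fin n → ℚ) : Bq n x y = dQQ x y := rfl

lemma Bq_refl : (Bq n).IsRefl := fun x y h => by
  rw [Bq_apply, dQQ_comm]; exact h

lemma dQQ_self_eq_zero {x : Fin n → ℚ} (h : dQQ x x = 0) : x = 0 := by
  have h2 : ∀ i ∈ Finset.univ, x i * x i = 0 := by
    rw [← Finset.sum_eq_zero_iff_of_nonneg (fun i _ => mul_self_nonneg (x i))]
    exact h
  funext i
  exact mul_self_eq_zero.1 (h2 i (Finset.mem_univ i))

lemma dotRR_self_eq_zero {x : Fin n → ℝ} (h : dotRR x x = 0) : x = 0 := by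
  have h2 : ∀ i ∈ Finset.univ, x i * x i = 0 := by
    rw [← Finset.sum_eq_zero_iff_of_nonneg (fun i _ => mul_self_nonneg (x i))]
    exact h
  funext i
  exact mul_self_eq_zero.1 (h2 i (Finset.mem_univ i))

/-- Main rationality lemma: a rational linear system of equalities and strict inequalities
with a real solution has an integer solution. -/
lemma ratSolution (v : Fin k → Fin n → ℚ) (A : Finset (Fin k)) (w : Fin n → ℝ)
    (h0 : ∀ u ∈ A, dotRR w (vR v u) = 0)
    (hpos : ∀ u ∉ A, 0 < dotRR w (vR v u)) :
    ∃ q : Fin n → ℚ, (∀ u ∈ A, dQQ q (v u) = 0) ∧ (∀ u ∉ A, 0 < dQQ q (v u)) := by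
  classical
  -- the span of the generators indexed by A, and its orthogonal complement
  set U : Submodule ℚ (Fin n → ℚ) := Submodule.span ℚ (v '' ↑A) with hU
  have hnd : ((Bq n).restrict U).Nondegenerate := by
    refine ⟨fun x hx => ?_, fun x hx => ?_⟩
    · have := hx x
      rw [LinearMap.BilinForm.restrict_apply] at this
      exact Subtype.ext (dQQ_self_eq_zero this)
    · have := hx x
      rw [LinearMap.BilinForm.restrict_apply] at this
      exact Subtype.ext (dQQ_self_eq_zero this)
  have hcompl : IsCompl U ((Bq n).orthogonal U) :=
    LinearMap.BilinForm.isCompl_orthogonal_of_restrict_nondegenerate Bq_refl hnd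
  have hsup : U ⊔ (Bq n).orthogonal U = ⊤ := codisjoint_iff.1 hcompl.codisjoint
  -- decompose the standard basis vectors
  have hdec : ∀ i : Fin n, ∃ p ∈ U, ∃ r ∈ (Bq n).orthogonal U, p + r = Pi.single i 1 := by
    intro i
    have : (Pi.single i 1 : Fin n → ℚ) ∈ U ⊔ (Bq n).orthogonal U := by
      rw [hsup]; trivial
    exact Submodule.mem_sup.1 this
  choose p hp r hr hpr using hdec
  -- orthogonality of the r's to the generators in A
  have hrA : ∀ i, ∀ u ∈ A, dQQ (r i) (v u) = 0 := by
    intro i u hu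
    have hvU : v u ∈ U := Submodule.subset_span ⟨u, hu, rfl⟩
    have := hr i (v u) hvU
    rw [Bq_apply] at this
    rw [dQQ_comm]; exact this
  -- real casts
  set rR : Fin n → Fin n → ℝ := fun i => cQR (r i) with hrR
  set s : Fin n → ℝ := ∑ i, w i • rR i with hs
  set t : Fin n → ℝ := ∑ i, w i • cQR (p i) with hts
  have hst : s + t = w := by
    rw [hs, hts, ← Finset.sum_add_distrib]
    have : ∀ i, w i • rR i + w i • cQR (p i) = Pi.single i (w i) := by
      intro i
      rw [← smul_add]
      have hcast : rR i + cQR (p i) = Pi.single i (1 : ℝ) := by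
        funext j
        have h1 : p i j + r i j = (Pi.single i (1:ℚ) : Fin n → ℚ) j := by
          rw [← Pi.add_apply (p i) (r i), hpr i]
        simp only [Pi.add_apply, hrR, cQR]
        rw [add_comm, ← Rat.cast_add, h1]
        simp [Pi.single_apply, apply_ite (fun (x : ℚ) => (x : ℝ))]
      rw [hcast]
      funext j
      by_cases hji : j = i
      · subst hji; simp
      · simp [Pi.single_apply, hji]
    rw [Finset.sum_congr rfl fun i _ => this i, Finset.univ_sum_single]
  -- the rational part of the decomposition of w vanishes
  have hsA : ∀ u ∈ A, dotRR s (vR v u) = 0 := by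
    intro u hu
    rw [hs, dotRR_sum_left' Finset.univ]
    refine Finset.sum_eq_zero fun i _ => ?_
    have : dotRR (rR i) (vR v u) = 0 := by
      have h2 := dQQ_cast (r i) (v u)
      rw [hrA i u hu] at h2
      simp only [Rat.cast_zero] at h2
      simp only [hrR]
      exact h2.symm
    rw [this, mul_zero]
  have htA : ∀ u ∈ A, dotRR t (vR v u) = 0 := by
    intro u hu
    have : dotRR (s + t) (vR v u) = 0 := by rw [hst]; exact h0 u hu
    rw [dotRR_add_left, hsA u hu, zero_add] at this
    exact this
  -- t lies in the real span of the casted generators in A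
  have htmem : t ∈ Submodule.span ℝ ((A.image (fun u => vR v u) : Finset (Fin n → ℝ)) :
      Set (Fin n → ℝ)) := by
    rw [hts]
    refine Submodule.sum_mem _ fun i _ => Submodule.smul_mem _ _ ?_
    have hpi := hp i
    rw [hU] at hpi
    refine Submodule.span_induction (p := fun x _ => cQR x ∈ Submodule.span ℝ
      ((A.image (fun u => vR v u) : Finset (Fin n → ℝ)) : Set (Fin n → ℝ))) ?_ ?_ ?_ ?_ hpi
    · rintro x ⟨u, hu, rfl⟩
      show cQR (v u) ∈ _
      exact Submodule.subset_span (by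
        rw [Finset.coe_image]
        exact ⟨u, hu, rfl⟩)
    · show cQR 0 ∈ _
      have : cQR (0 : Fin n → ℚ) = 0 := by funext j; simp [cQR]
      rw [this]; exact Submodule.zero_mem _
    · intro x y _ _ hx hy
      show cQR (x + y) ∈ _
      have : cQR (x + y) = cQR x + cQR y := by funext j; simp [cQR]
      rw [this]; exact Submodule.add_mem _ hx hy
    · intro c x _ hx
      show cQR (c • x) ∈ _
      have : cQR (c • x) = (c : ℝ) • cQR x := by funext j; simp [cQR]
      rw [this]; exact Submodule.smul_mem _ _ hx
  -- positivity forces t = 0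
  have ht0 : t = 0 := by
    obtain ⟨f, -, hf⟩ := Submodule.mem_span_finset.1 htmem
    refine dotRR_self_eq_zero ?_
    have hstep := dotRR_sum_left' (A.image (fun u => vR v u)) f (fun y => y)
    have htt : dotRR t t = ∑ y ∈ A.image (fun u => vR v u), f y * dotRR y t := by
      nth_rewrite 1 [← hf]
      exact hstep t
    rw [htt]
    refine Finset.sum_eq_zero fun y hy => ?_
    obtain ⟨u, hu, rfl⟩ := Finset.mem_image.1 hy
    rw [dotRR_comm, htA u hu, mul_zero]
  have hws : w = s := by rw [← hst, ht0, add_zero]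
  -- values of w against generators as combinations of rational data
  have hval : ∀ u, dotRR w (vR v u) = ∑ i, w i * dotRR (rR i) (vR v u) := by
    intro u
    conv_lhs => rw [hws, hs]
    exact dotRR_sum_left' _ _ _ _
  -- now approximate w by rationals
  by_cases hAall : ∀ u, u ∈ A
  · refine ⟨0, fun u hu => by simp [dQQ], fun u hu => absurd (hAall u) hu⟩
  · have hAne : (Finset.univ \ A).Nonempty := by
      push_neg at hAall
      obtain ⟨u, hu⟩ := hAall
      exact ⟨u, Finset.mem_sdiff.2 ⟨Finset.mem_univ u, hu⟩⟩
    set C : ℝ := 1 + ∑ u, ∑ i, |dotRR (rR i) (vR v u)| with hC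
    have hCpos : 0 < C := by
      have : (0:ℝ) ≤ ∑ u, ∑ i, |dotRR (rR i) (vR v u)| :=
        Finset.sum_nonneg fun u _ => Finset.sum_nonneg fun i _ => abs_nonneg _
      linarith
    have hCb : ∀ u, ∑ i, |dotRR (rR i) (vR v u)| ≤ C := by
      intro u
      have h1 : ∑ i, |dotRR (rR i) (vR v u)| ≤ ∑ u', ∑ i, |dotRR (rR i) (vR v u')| :=
        Finset.single_le_sum (f := fun u' => ∑ i, |dotRR (rR i) (vR v u')|)
          (fun u' _ => Finset.sum_nonneg fun i _ => abs_nonneg _) (Finset.mem_univ u)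
      linarith
    set δ : ℝ := (Finset.univ \ A).inf' hAne (fun u => dotRR w (vR v u)) with hδdef
    have hδpos : 0 < δ := by
      rw [hδdef, Finset.lt_inf'_iff]
      intro u hu
      exact hpos u (Finset.mem_sdiff.1 hu).2
    have hεpos : 0 < δ / (2 * C) := div_pos hδpos (by linarith)
    choose γ hγ using fun i => exists_rat_near (K := ℝ) (w i) hεpos
    refine ⟨fun j => ∑ i, γ i * r i j, ?_, ?_⟩
    · intro u hu
      have : (fun j => ∑ i, γ i * r i j) = ∑ i, γ i • r i := by
        funext j; simp [Finset.sum_apply]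
      rw [this, dQQ_sum_left]
      exact Finset.sum_eq_zero fun i _ => by rw [hrA i u hu, mul_zero]
    · intro u hu
      set q : Fin n → ℚ := fun j => ∑ i, γ i * r i j with hq
      have hqcast : ((dQQ q (v u) : ℚ) : ℝ) = ∑ i, (γ i : ℝ) * dotRR (rR i) (vR v u) := by
        have hq2 : q = ∑ i, γ i • r i := by funext j; simp [hq, Finset.sum_apply]
        rw [hq2, dQQ_sum_left]
        push_cast
        refine Finset.sum_congr rfl fun i _ => ?_
        rw [dQQ_cast]
        rfl
      have hdiff : |((dQQ q (v u) : ℚ) : ℝ) - dotRR w (vR v u)| ≤ δ / 2 := by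
        rw [hqcast, hval u, ← Finset.sum_sub_distrib]
        calc |∑ i, ((γ i : ℝ) * dotRR (rR i) (vR v u) - w i * dotRR (rR i) (vR v u))|
            ≤ ∑ i, |(γ i : ℝ) * dotRR (rR i) (vR v u) - w i * dotRR (rR i) (vR v u)| :=
              Finset.abs_sum_le_sum_abs _ _
          _ ≤ ∑ i, (δ / (2 * C)) * |dotRR (rR i) (vR v u)| := by
              refine Finset.sum_le_sum fun i _ => ?_
              rw [← sub_mul, abs_mul]
              refine mul_le_mul_of_nonneg_right ?_ (abs_nonneg _)
              have := hγ i
              rw [abs_sub_comm] at this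
              exact this.le
          _ = (δ / (2 * C)) * ∑ i, |dotRR (rR i) (vR v u)| := by rw [Finset.mul_sum]
          _ ≤ (δ / (2 * C)) * C :=
              mul_le_mul_of_nonneg_left (hCb u) hεpos.le
          _ = δ / 2 := by field_simp
      have hwu : δ ≤ dotRR w (vR v u) := by
        rw [hδdef]
        exact Finset.inf'_le _ (Finset.mem_sdiff.2 ⟨Finset.mem_univ u, hu⟩)
      have : 0 < ((dQQ q (v u) : ℚ) : ℝ) := by
        have := abs_sub_le_iff.1 hdiff
        linarith [this.1, this.2]
      exact_mod_cast this

end Stmt8R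
namespace Stmt8F

open Stmt8 Stmt8R

variable {n k : ℕ}

lemma ratToInt (q : Fin n → ℚ) :
    ∃ (m : Fin n → ℤ) (d : ℕ), 0 < d ∧ ∀ i, (m i : ℚ) = (d : ℚ) * q i := by
  classical
  set d : ℕ := ∏ i, (q i).den with hd
  have hdpos : 0 < d := Finset.prod_pos fun i _ => (q i).pos
  refine ⟨fun i => ((d / (q i).den : ℕ) : ℤ) * (q i).num, d, hdpos, fun i => ?_⟩
  obtain ⟨c, hc⟩ : (q i).den ∣ d := Finset.dvd_prod_of_mem _ (Finset.mem_univ i)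
  have hden : ((q i).den : ℚ) ≠ 0 := Nat.cast_ne_zero.2 (q i).den_nz
  have hnum : ((q i).num : ℚ) = q i * (q i).den :=
    (div_eq_iff hden).1 (Rat.num_div_den (q i))
  have hc' : (d / (q i).den : ℕ) = c := by
    rw [hc]; exact Nat.mul_div_cancel_left c (q i).pos
  calc ((((d / (q i).den : ℕ) : ℤ) * (q i).num : ℤ) : ℚ)
      = (c : ℚ) * ((q i).num : ℚ) := by rw [hc']; push_cast; ring
    _ = (c : ℚ) * (q i * (q i).den) := by rw [hnum]
    _ = (d : ℚ) * q i := by rw [hc]; push_cast; ring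

lemma intSolution (v : Fin k → Fin n → ℚ) (A : Finset (Fin k)) (w : Fin n → ℝ)
    (h0 : ∀ u ∈ A, dotRR w (vR v u) = 0)
    (hpos : ∀ u ∉ A, 0 < dotRR w (vR v u)) :
    ∃ m : Fin n → ℤ, (∀ u ∈ A, dotIR m (vR v u) = 0) ∧ (∀ u ∉ A, 0 < dotIR m (vR v u)) := by
  obtain ⟨q, hq0, hqpos⟩ := ratSolution v A w h0 hpos
  obtain ⟨m, d, hd, hm⟩ := ratToInt q
  have key : ∀ u, dotQ v m u = d * dQQ q (v u) := by
    intro u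
    unfold dotQ dQQ
    rw [Finset.mul_sum]
    exact Finset.sum_congr rfl fun i _ => by rw [hm i]; ring
  refine ⟨m, fun u hu => ?_, fun u hu => ?_⟩
  · rw [dotIR_vR, key u, hq0 u hu, mul_zero, Rat.cast_zero]
  · rw [dotIR_vR, key u]
    have : (0:ℚ) < (d:ℚ) * dQQ q (v u) :=
      mul_pos (by exact_mod_cast hd) (hqpos u hu)
    exact_mod_cast this

/-- dot of a functional against a cone combination -/
lemma dot_cone_sum (v : Fin k → Fin n → ℚ) (w : Fin n → ℝ) (lam : Fin k → ℝ) :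
    dotRR w (∑ u, lam u • fun i => ((v u i : ℝ))) = ∑ u, lam u * dotRR w (vR v u) :=
  dotRR_sum_right w lam (fun u => vR v u)

lemma cone_dot_zero_real (v : Fin k → Fin n → ℚ) (w : Fin n → ℝ)
    (hw : ∀ u, 0 ≤ dotRR w (vR v u)) (lam : Fin k → ℝ) (hlam : ∀ u, 0 ≤ lam u)
    (hx : dotRR w (∑ u, lam u • fun i => ((v u i : ℝ))) = 0) :
    ∀ u, lam u * dotRR w (vR v u) = 0 := by
  rw [dot_cone_sum] at hx
  have := (Finset.sum_eq_zero_iff_of_nonneg (fun u _ =>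
    mul_nonneg (hlam u) (hw u))).1 hx
  exact fun u => this u (Finset.mem_univ u)

/-- Everything we need about a face of a rational cone: an integer functional cutting it out. -/
lemma face_struct {τ : Set (Fin n → ℝ)} (v : Fin k → Fin n → ℚ)
    (hτ : IsFaceOf τ (coneOf v)) :
    ∃ mstar : Fin n → ℤ, mstar ∈ Ssigma (coneOf v) ∧ mstar ∈ Mperp τ ∧
      (∀ x, x ∈ τ ↔ (x ∈ coneOf v ∧ dotIR mstar x = 0)) := by
  classical
  obtain ⟨w, hw1, hw2⟩ := hτ
  have hw1' : ∀ x ∈ coneOf v, 0 ≤ dotRR w x := hw1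
  set A : Finset (Fin k) := Finset.univ.filter (fun u => dotRR w (vR v u) = 0) with hA
  have hA0 : ∀ u ∈ A, dotRR w (vR v u) = 0 := fun u hu => (Finset.mem_filter.1 hu).2
  have hApos : ∀ u ∉ A, 0 < dotRR w (vR v u) := by
    intro u hu
    have h1 : 0 ≤ dotRR w (vR v u) := hw1' _ (vR_mem_coneOf v u)
    have h2 : ¬ dotRR w (vR v u) = 0 := fun h =>
      hu (Finset.mem_filter.2 ⟨Finset.mem_univ u, h⟩)
    exact lt_of_le_of_ne h1 (Ne.symm h2)
  obtain ⟨mstar, hm0, hmpos⟩ := intSolution v A w hA0 hApos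
  have hmnonneg : ∀ u, 0 ≤ dotIR mstar (vR v u) := by
    intro u
    by_cases hu : u ∈ A
    · rw [hm0 u hu]
    · exact (hmpos u hu).le
  have hmS : mstar ∈ Ssigma (coneOf v) := (mem_Ssigma_iff v mstar).2 hmnonneg
  have hiff : ∀ x, x ∈ τ ↔ (x ∈ coneOf v ∧ dotIR mstar x = 0) := by
    intro x
    rw [hw2]
    simp only [Set.mem_setOf_eq]
    constructor
    · rintro ⟨hxσ, hxw⟩
      refine ⟨hxσ, ?_⟩
      obtain ⟨lam, hlam, rfl⟩ := hxσ
      have hvan := cone_dot_zero_real v w (fun u => hw1' _ (vR_mem_coneOf v u)) lam hlam hxw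
      rw [dotIR_eq_dotRR, dot_cone_sum]
      refine Finset.sum_eq_zero fun u _ => ?_
      by_cases hu : u ∈ A
      · rw [← dotIR_eq_dotRR, hm0 u hu, mul_zero]
      · have : lam u = 0 := by
          have := hvan u
          rcases mul_eq_zero.1 this with h | h
          · exact h
          · exact absurd h (ne_of_gt (hApos u hu))
        rw [this, zero_mul]
    · rintro ⟨hxσ, hxm⟩
      refine ⟨hxσ, ?_⟩
      obtain ⟨lam, hlam, rfl⟩ := hxσ
      rw [dotIR_eq_dotRR] at hxm
      have hvan := cone_dot_zero_real v (fun i => (mstar i : ℝ))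
        (fun u => hmnonneg u) lam hlam hxm
      show dotRR w (∑ u, lam u • fun i => ((v u i : ℝ))) = 0
      rw [dot_cone_sum]
      refine Finset.sum_eq_zero fun u _ => ?_
      by_cases hu : u ∈ A
      · rw [hA0 u hu, mul_zero]
      · have : lam u = 0 := by
          have := hvan u
          rcases mul_eq_zero.1 this with h | h
          · exact h
          · exact absurd h (ne_of_gt (hmpos u hu))
        rw [this, zero_mul]
  have hmperp : mstar ∈ Mperp τ := fun x hx => ((hiff x).1 hx).2
  exact ⟨mstar, hmS, hmperp, hiff⟩

end Stmt8F
namespace Stmt8K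

open Stmt8 Stmt8R Stmt8F

variable {n k : ℕ}

lemma dotIR_add (a b : Fin n → ℤ) (x : Fin n → ℝ) :
    dotIR (a + b) x = dotIR a x + dotIR b x := by
  unfold dotIR
  rw [← Finset.sum_add_distrib]
  exact Finset.sum_congr rfl fun i _ => by simp only [Pi.add_apply]; push_cast; ring

lemma dotIR_neg (a : Fin n → ℤ) (x : Fin n → ℝ) : dotIR (-a) x = -dotIR a x := by
  unfold dotIR
  rw [← Finset.sum_neg_distrib]
  exact Finset.sum_congr rfl fun i _ => by simp only [Pi.neg_apply]; push_cast; ring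

lemma dotIR_sub (a b : Fin n → ℤ) (x : Fin n → ℝ) :
    dotIR (a - b) x = dotIR a x - dotIR b x := by
  rw [sub_eq_add_neg, dotIR_add, dotIR_neg, sub_eq_add_neg]

lemma dotIR_nsmul (K : ℕ) (a : Fin n → ℤ) (x : Fin n → ℝ) :
    dotIR (K • a) x = K * dotIR a x := by
  unfold dotIR
  rw [Finset.mul_sum]
  exact Finset.sum_congr rfl fun i _ => by
    simp only [Pi.smul_apply, nsmul_eq_mul]; push_cast; ring

lemma dotIR_finsum {ι : Type*} (t : Finset ι) (f : ι → Fin n → ℤ) (x : Fin n → ℝ) :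
    dotIR (∑ i ∈ t, f i) x = ∑ i ∈ t, dotIR (f i) x := by
  classical
  induction t using Finset.cons_induction with
  | empty => simp [dotIR]
  | cons a t ha ih => rw [Finset.sum_cons, Finset.sum_cons, dotIR_add, ih]

/-- The key trick: bounding a lattice functional by a multiple of a strictly positive one. -/
lemma exists_K (v : Fin k → Fin n → ℚ) (mstar m : Fin n → ℤ)
    (hms : ∀ u, 0 ≤ dotIR mstar (vR v u))
    (hm0 : ∀ u, dotIR mstar (vR v u) = 0 → dotIR m (vR v u) = 0) :
    ∃ K : ℕ, ((K • mstar) - m) ∈ Ssigma (coneOf v) := by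
  classical
  set Ku : Fin k → ℕ := fun u =>
    if dotIR mstar (vR v u) = 0 then 0 else ⌈dotIR m (vR v u) / dotIR mstar (vR v u)⌉₊
    with hKu
  refine ⟨Finset.univ.sup Ku, (mem_Ssigma_iff v _).2 fun u => ?_⟩
  rw [dotIR_sub, dotIR_nsmul]
  by_cases h : dotIR mstar (vR v u) = 0
  · rw [h, hm0 u h]
    simp
  · have hpos : 0 < dotIR mstar (vR v u) := lt_of_le_of_ne (hms u) (Ne.symm h)
    have h1 : (Ku u : ℝ) ≤ (Finset.univ.sup Ku : ℕ) := by
      exact_mod_cast Finset.le_sup (f := Ku) (Finset.mem_univ u)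
    have h2 : dotIR m (vR v u) / dotIR mstar (vR v u) ≤ (Ku u : ℝ) := by
      rw [hKu]
      simp only [if_neg h]
      exact Nat.le_ceil _
    have h3 : dotIR m (vR v u) / dotIR mstar (vR v u) ≤ ((Finset.univ.sup Ku : ℕ) : ℝ) :=
      le_trans h2 h1
    have := (div_le_iff₀ hpos).1 h3
    linarith

end Stmt8K
namespace Stmt8S

open Stmt8 Stmt8R Stmt8F Stmt8K

variable {n k : ℕ}

/-- real value of a non-top element -/
def rv (x : WithTop ℝ) : ℝ := x.untopD 0

lemma rv_coe (r : ℝ) : rv (r : WithTop ℝ) = r := WithTop.untopD_coe 0 r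

lemma coe_rv {x : WithTop ℝ} (h : x ≠ ⊤) : ((rv x : ℝ) : WithTop ℝ) = x := by
  obtain ⟨r, rfl⟩ := WithTop.ne_top_iff_exists.1 h
  rw [rv_coe]

lemma rv_add {x y : WithTop ℝ} (hx : x ≠ ⊤) (hy : y ≠ ⊤) : rv (x + y) = rv x + rv y := by
  obtain ⟨a, rfl⟩ := WithTop.ne_top_iff_exists.1 hx
  obtain ⟨b, rfl⟩ := WithTop.ne_top_iff_exists.1 hy
  rw [← WithTop.coe_add, rv_coe, rv_coe, rv_coe]

lemma zero_ne_top' : (0 : WithTop ℝ) ≠ ⊤ := WithTop.coe_ne_top (a := (0 : ℝ))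

lemma surj_main (v : Fin k → Fin n → ℚ) (φ : ↥(Ssigma (coneOf v)) → WithTop ℝ)
    (hφ0 : φ 0 = 0) (hφadd : ∀ a b, φ (a + b) = φ a + φ b) :
    ∃ p : Σ τ : {τ : Set (Fin n → ℝ) // IsFaceOf τ (coneOf v)}, (↥(Mperp τ.1) →+ ℝ),
      toricBoundaryMap (coneOf v) p = φ := by
  classical
  have hφsum : ∀ {ι : Type} (t : Finset ι) (f : ι → ↥(Ssigma (coneOf v))),
      (∀ i ∈ t, φ (f i) ≠ ⊤) → φ (∑ i ∈ t, f i) ≠ ⊤ := by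
    intro ι t f h
    induction t using Finset.cons_induction with
    | empty =>
        rw [Finset.sum_empty, hφ0]; exact zero_ne_top'
    | cons a t ha ih =>
        rw [Finset.sum_cons, hφadd]
        exact WithTop.add_ne_top.2 ⟨h a (Finset.mem_cons_self a t),
          ih fun i hi => h i (Finset.mem_cons_of_mem hi)⟩
  -- the finiteness locus A among generators
  set A : Finset (Fin k) := Finset.univ.filter
    (fun u => ∀ s : ↥(Ssigma (coneOf v)), φ s ≠ ⊤ → dotIR s.1 (vR v u) = 0) with hA
  have hAmem : ∀ u ∈ A, ∀ s : ↥(Ssigma (coneOf v)), φ s ≠ ⊤ → dotIR s.1 (vR v u) = 0 :=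
    fun u hu => (Finset.mem_filter.1 hu).2
  have hchoice : ∀ u : Fin k, ∃ s : ↥(Ssigma (coneOf v)), φ s ≠ ⊤ ∧
      (u ∉ A → 0 < dotIR s.1 (vR v u)) := by
    intro u
    by_cases hu : u ∈ A
    · exact ⟨0, by rw [hφ0]; exact zero_ne_top', fun h => absurd hu h⟩
    · have : ¬ ∀ s : ↥(Ssigma (coneOf v)), φ s ≠ ⊤ → dotIR s.1 (vR v u) = 0 := fun hcon =>
        hu (Finset.mem_filter.2 ⟨Finset.mem_univ u, hcon⟩)
      push_neg at this
      obtain ⟨s, hs1, hs2⟩ := this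
      exact ⟨s, hs1, fun _ =>
        lt_of_le_of_ne ((mem_Ssigma_iff v s.1).1 s.2 u) (Ne.symm hs2)⟩
  choose g hg1 hg2 using hchoice
  set MSZ : Fin n → ℤ := ∑ u, (g u).1 with hMSZ
  have hMSmem : MSZ ∈ Ssigma (coneOf v) := AddSubmonoid.sum_mem _ (fun u _ => (g u).2)
  set MS : ↥(Ssigma (coneOf v)) := ⟨MSZ, hMSmem⟩ with hMS
  have hMSeq : MS = ∑ u, g u := by
    apply Subtype.ext
    rw [AddSubmonoidClass.coe_finset_sum]
  have hMStop : φ MS ≠ ⊤ := by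
    rw [hMSeq]; exact hφsum Finset.univ g (fun u _ => hg1 u)
  have hMSdot0 : ∀ u ∈ A, dotIR MSZ (vR v u) = 0 := by
    intro u hu
    rw [hMSZ, dotIR_finsum]
    exact Finset.sum_eq_zero fun u' _ => hAmem u hu (g u') (hg1 u')
  have hMSdotpos : ∀ u, u ∉ A → 0 < dotIR MSZ (vR v u) := by
    intro u hu
    rw [hMSZ, dotIR_finsum]
    exact Finset.sum_pos' (fun u' _ => (mem_Ssigma_iff v _).1 (g u').2 u)
      ⟨u, Finset.mem_univ u, hg2 u hu⟩
  have hMSnonneg : ∀ u, 0 ≤ dotIR MSZ (vR v u) := (mem_Ssigma_iff v _).1 hMSmem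
  -- the face
  set τ : Set (Fin n → ℝ) := {x | x ∈ coneOf v ∧ dotIR MSZ x = 0} with hτ
  have hface : IsFaceOf τ (coneOf v) := ⟨fun i => (MSZ i : ℝ), hMSmem, rfl⟩
  have hgen : ∀ u, vR v u ∈ τ ↔ dotIR MSZ (vR v u) = 0 :=
    fun u => ⟨fun h => h.2, fun h => ⟨vR_mem_coneOf v u, h⟩⟩
  -- perp criterion from vanishing on A-generators
  have hperp_of : ∀ m : Fin n → ℤ, (∀ u ∈ A, dotIR m (vR v u) = 0) → m ∈ Mperp τ := by
    intro m hm x hx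
    obtain ⟨hxσ, hxMS⟩ := hx
    obtain ⟨lam, hlam, rfl⟩ := hxσ
    rw [dotIR_eq_dotRR] at hxMS ⊢
    have hvan := cone_dot_zero_real v (fun i => (MSZ i : ℝ))
      (fun u => hMSnonneg u) lam hlam hxMS
    rw [dot_cone_sum]
    refine Finset.sum_eq_zero fun u _ => ?_
    by_cases hu : u ∈ A
    · rw [← dotIR_eq_dotRR, hm u hu, mul_zero]
    · have : lam u = 0 := by
        rcases mul_eq_zero.1 (hvan u) with h | h
        · exact h
        · exact absurd h (ne_of_gt (hMSdotpos u hu))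
      rw [this, zero_mul]
  -- φ of multiples of MSZ is finite
  have hKM : ∀ K : ℕ, ∀ h : K • MSZ ∈ Ssigma (coneOf v), φ ⟨K • MSZ, h⟩ ≠ ⊤ := by
    intro K
    induction K with
    | zero =>
        intro h
        have : (⟨0 • MSZ, h⟩ : ↥(Ssigma (coneOf v))) = 0 := Subtype.ext (zero_nsmul _)
        rw [this, hφ0]; exact zero_ne_top'
    | succ K ih =>
        intro h
        have hKm : K • MSZ ∈ Ssigma (coneOf v) := nsmul_mem hMSmem K
        have : (⟨(K+1) • MSZ, h⟩ : ↥(Ssigma (coneOf v))) = ⟨K • MSZ, hKm⟩ + MS :=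
          Subtype.ext (succ_nsmul MSZ K)
        rw [this, hφadd]
        exact WithTop.add_ne_top.2 ⟨ih hKm, hMStop⟩
  -- the key characterization of the finiteness domain
  have hkey : ∀ s : ↥(Ssigma (coneOf v)), ((s : Fin n → ℤ) ∈ Mperp τ ↔ φ s ≠ ⊤) := by
    intro s
    constructor
    · intro hmem
      have hm0 : ∀ u, dotIR MSZ (vR v u) = 0 → dotIR s.1 (vR v u) = 0 := fun u h =>
        hmem (vR v u) ((hgen u).2 h)
      obtain ⟨K, hK⟩ := exists_K v MSZ s.1 hMSnonneg hm0
      have hsum : s + ⟨K • MSZ - s.1, hK⟩ = (⟨K • MSZ, nsmul_mem hMSmem K⟩ : ↥(Ssigma (coneOf v))) := by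
        apply Subtype.ext
        show s.1 + (K • MSZ - s.1) = K • MSZ
        abel
      have htop : φ s + φ ⟨K • MSZ - s.1, hK⟩ ≠ ⊤ := by
        rw [← hφadd, hsum]
        exact hKM K _
      exact (WithTop.add_ne_top.1 htop).1
    · intro htop
      exact hperp_of s.1 (fun u hu => hAmem u hu s htop)
  -- decomposition of Mperp elements as differences
  have hdec : ∀ m : Fin n → ℤ, m ∈ Mperp τ →
      ∃ a b : ↥(Ssigma (coneOf v)), φ a ≠ ⊤ ∧ φ b ≠ ⊤ ∧ m = a.1 - b.1 := by
    intro m hm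
    have hm0 : ∀ u, dotIR MSZ (vR v u) = 0 → dotIR (-m) (vR v u) = 0 := by
      intro u h
      rw [dotIR_neg, hm (vR v u) ((hgen u).2 h), neg_zero]
    obtain ⟨K, hK⟩ := exists_K v MSZ (-m) hMSnonneg hm0
    have hKa : K • MSZ - -m = m + K • MSZ := by abel
    rw [hKa] at hK
    have hbS : K • MSZ ∈ Ssigma (coneOf v) := nsmul_mem hMSmem K
    refine ⟨⟨m + K • MSZ, hK⟩, ⟨K • MSZ, hbS⟩, ?_, hKM K hbS, by
      funext i
      show m i = m i + (K • MSZ) i - (K • MSZ) i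
      ring⟩
    apply (hkey _).1
    intro x hx
    show dotIR (m + K • MSZ) x = 0
    rw [dotIR_add, dotIR_nsmul, hm x hx, hx.2, mul_zero, add_zero]
  choose fa fb hfa hfb hfab using hdec
  -- well-definedness of difference values
  have hwd : ∀ a b a' b' : ↥(Ssigma (coneOf v)), φ a ≠ ⊤ → φ b ≠ ⊤ → φ a' ≠ ⊤ → φ b' ≠ ⊤ →
      a.1 - b.1 = a'.1 - b'.1 → rv (φ a) - rv (φ b) = rv (φ a') - rv (φ b') := by
    intro a b a' b' ha hb ha' hb' heq
    have hsum : a + b' = a' + b := by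
      apply Subtype.ext
      show a.1 + b'.1 = a'.1 + b.1
      exact sub_eq_sub_iff_add_eq_add.1 heq
    have heq2 : φ a + φ b' = φ a' + φ b := by rw [← hφadd, ← hφadd, hsum]
    obtain ⟨ra, hra⟩ := WithTop.ne_top_iff_exists.1 ha
    obtain ⟨rb, hrb⟩ := WithTop.ne_top_iff_exists.1 hb
    obtain ⟨ra', hra'⟩ := WithTop.ne_top_iff_exists.1 ha'
    obtain ⟨rb', hrb'⟩ := WithTop.ne_top_iff_exists.1 hb'
    rw [← hra, ← hrb, ← hra', ← hrb', ← WithTop.coe_add, ← WithTop.coe_add] at heq2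
    have h3 : ra + rb' = ra' + rb := WithTop.coe_eq_coe.1 heq2
    rw [← hra, ← hrb, ← hra', ← hrb', rv_coe, rv_coe, rv_coe, rv_coe]
    linarith
  set ℓf : ↥(Mperp τ) → ℝ := fun m => rv (φ (fa m.1 m.2)) - rv (φ (fb m.1 m.2)) with hℓf
  have hℓadd : ∀ m₁ m₂ : ↥(Mperp τ), ℓf (m₁ + m₂) = ℓf m₁ + ℓf m₂ := by
    intro m₁ m₂
    have hness_a : φ (fa m₁.1 m₁.2 + fa m₂.1 m₂.2) ≠ ⊤ := by
      rw [hφadd]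
      exact WithTop.add_ne_top.2 ⟨hfa m₁.1 m₁.2, hfa m₂.1 m₂.2⟩
    have hness_b : φ (fb m₁.1 m₁.2 + fb m₂.1 m₂.2) ≠ ⊤ := by
      rw [hφadd]
      exact WithTop.add_ne_top.2 ⟨hfb m₁.1 m₁.2, hfb m₂.1 m₂.2⟩
    have h1 : ℓf (m₁ + m₂) = rv (φ (fa m₁.1 m₁.2 + fa m₂.1 m₂.2)) -
        rv (φ (fb m₁.1 m₁.2 + fb m₂.1 m₂.2)) := by
      refine hwd _ _ _ _ (hfa (m₁+m₂).1 (m₁+m₂).2) (hfb (m₁+m₂).1 (m₁+m₂).2)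
        hness_a hness_b ?_
      rw [← hfab (m₁+m₂).1 (m₁+m₂).2]
      show m₁.1 + m₂.1 = (fa m₁.1 m₁.2 + fa m₂.1 m₂.2).1 - (fb m₁.1 m₁.2 + fb m₂.1 m₂.2).1
      show m₁.1 + m₂.1 = (fa m₁.1 m₁.2).1 + (fa m₂.1 m₂.2).1 -
        ((fb m₁.1 m₁.2).1 + (fb m₂.1 m₂.2).1)
      have e1 : m₁.1 + m₂.1 = ((fa m₁.1 m₁.2).1 - (fb m₁.1 m₁.2).1) +
          ((fa m₂.1 m₂.2).1 - (fb m₂.1 m₂.2).1) := by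
        rw [← hfab m₁.1 m₁.2, ← hfab m₂.1 m₂.2]
      rw [e1]
      abel
    rw [h1, hφadd, hφadd, rv_add (hfa m₁.1 m₁.2) (hfa m₂.1 m₂.2),
      rv_add (hfb m₁.1 m₁.2) (hfb m₂.1 m₂.2)]
    show _ = rv (φ (fa m₁.1 m₁.2)) - rv (φ (fb m₁.1 m₁.2)) +
      (rv (φ (fa m₂.1 m₂.2)) - rv (φ (fb m₂.1 m₂.2)))
    ring
  set ℓ : ↥(Mperp τ) →+ ℝ := AddMonoidHom.mk' ℓf hℓadd with hℓ
  refine ⟨⟨⟨τ, hface⟩, ℓ⟩, ?_⟩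
  funext s
  show (if h : (s : Fin n → ℤ) ∈ Mperp τ then ((ℓ ⟨(s : Fin n → ℤ), h⟩ : ℝ) : WithTop ℝ)
    else ⊤) = φ s
  by_cases h : (s : Fin n → ℤ) ∈ Mperp τ
  · rw [dif_pos h]
    have hstop : φ s ≠ ⊤ := (hkey s).1 h
    have hval : ℓf ⟨s.1, h⟩ = rv (φ s) := by
      have := hwd (fa s.1 h) (fb s.1 h) s 0 (hfa s.1 h) (hfb s.1 h) hstop
        (by rw [hφ0]; exact zero_ne_top') ?_
      · rw [hℓf]
        show rv (φ (fa s.1 h)) - rv (φ (fb s.1 h)) = rv (φ s)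
        rw [this]
        have : φ (0 : ↥(Ssigma (coneOf v))) = ((0:ℝ) : WithTop ℝ) := by rw [hφ0]; rfl
        rw [this, rv_coe, sub_zero]
      · rw [← hfab s.1 h]
        show s.1 = s.1 - (0 : ↥(Ssigma (coneOf v))).1
        show s.1 = s.1 - (0 : Fin n → ℤ)
        rw [sub_zero]
    show ((ℓf ⟨s.1, h⟩ : ℝ) : WithTop ℝ) = φ s
    rw [hval]
    exact coe_rv hstop
  · rw [dif_neg h]
    by_contra hne
    exact h ((hkey s).2 fun htop => hne htop.symm)

end Stmt8S
namespace Stmt8I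

open Stmt8 Stmt8R Stmt8F Stmt8K Stmt8S

variable {n k : ℕ}

lemma inj_main (v : Fin k → Fin n → ℚ)
    (p p' : Σ τ : {τ : Set (Fin n → ℝ) // IsFaceOf τ (coneOf v)}, (↥(Mperp τ.1) →+ ℝ))
    (h : toricBoundaryMap (coneOf v) p = toricBoundaryMap (coneOf v) p') : p = p' := by
  classical
  obtain ⟨⟨τ₁, h₁⟩, ℓ₁⟩ := p
  obtain ⟨⟨τ₂, h₂⟩, ℓ₂⟩ := p'
  obtain ⟨m1, hm1S, hm1P, hiff1⟩ := face_struct v h₁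
  obtain ⟨m2, hm2S, hm2P, hiff2⟩ := face_struct v h₂
  have hdom : ∀ s : ↥(Ssigma (coneOf v)),
      ((s : Fin n → ℤ) ∈ Mperp τ₁ ↔ (s : Fin n → ℤ) ∈ Mperp τ₂) := by
    intro s
    have hs := congrFun h s
    unfold toricBoundaryMap at hs
    constructor
    · intro hmem
      by_contra hnot
      rw [dif_pos hmem, dif_neg hnot] at hs
      exact WithTop.coe_ne_top hs
    · intro hmem
      by_contra hnot
      rw [dif_neg hnot, dif_pos hmem] at hs
      exact WithTop.coe_ne_top hs.symm
  have hττ : τ₁ = τ₂ := by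
    apply Set.Subset.antisymm
    · intro x hx
      have hm2P1 : m2 ∈ Mperp τ₁ := (hdom ⟨m2, hm2S⟩).2 hm2P
      exact (hiff2 x).2 ⟨((hiff1 x).1 hx).1, hm2P1 x hx⟩
    · intro x hx
      have hm1P2 : m1 ∈ Mperp τ₂ := (hdom ⟨m1, hm1S⟩).1 hm1P
      exact (hiff1 x).2 ⟨((hiff2 x).1 hx).1, hm1P2 x hx⟩
  subst hττ
  have hℓ : ℓ₁ = ℓ₂ := by
    ext m
    have hm0 : ∀ u, dotIR m1 (vR v u) = 0 → dotIR (-(m.1)) (vR v u) = 0 := by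
      intro u hu0
      have hvτ : vR v u ∈ τ₁ := (hiff1 (vR v u)).2 ⟨vR_mem_coneOf v u, hu0⟩
      rw [dotIR_neg, m.2 (vR v u) hvτ, neg_zero]
    have hm1nonneg := (mem_Ssigma_iff v m1).1 hm1S
    obtain ⟨K, hK⟩ := exists_K v m1 (-(m.1)) hm1nonneg hm0
    have hKa : K • m1 - -(m.1) = m.1 + K • m1 := by abel
    rw [hKa] at hK
    have hbS : K • m1 ∈ Ssigma (coneOf v) := nsmul_mem hm1S K
    have haP : m.1 + K • m1 ∈ Mperp τ₁ := by
      intro x hx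
      rw [dotIR_add, dotIR_nsmul, m.2 x hx, hm1P x hx, mul_zero, add_zero]
    have hbP : K • m1 ∈ Mperp τ₁ := by
      intro x hx
      rw [dotIR_nsmul, hm1P x hx, mul_zero]
    have hdecomp : ∀ ℓ : ↥(Mperp τ₁) →+ ℝ,
        ℓ m = ℓ ⟨m.1 + K • m1, haP⟩ - ℓ ⟨K • m1, hbP⟩ := by
      intro ℓ
      have hadd : m + ⟨K • m1, hbP⟩ = (⟨m.1 + K • m1, haP⟩ : ↥(Mperp τ₁)) :=
        Subtype.ext rfl
      have hma := map_add ℓ m ⟨K • m1, hbP⟩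
      rw [hadd] at hma
      linarith [hma]
    have hval : ∀ (mm : Fin n → ℤ) (hS : mm ∈ Ssigma (coneOf v)) (hP : mm ∈ Mperp τ₁),
        ℓ₁ ⟨mm, hP⟩ = ℓ₂ ⟨mm, hP⟩ := by
      intro mm hS hP
      have hs := congrFun h ⟨mm, hS⟩
      unfold toricBoundaryMap at hs
      have hP' : ((⟨mm, hS⟩ : ↥(Ssigma (coneOf v))) : Fin n → ℤ) ∈ Mperp τ₁ := hP
      rw [dif_pos hP', dif_pos hP'] at hs
      exact WithTop.coe_eq_coe.1 hs
    rw [hdecomp ℓ₁, hdecomp ℓ₂, hval _ hK haP, hval _ hbS hbP]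
  subst hℓ
  rfl

lemma maps_main (v : Fin k → Fin n → ℚ)
    (p : Σ τ : {τ : Set (Fin n → ℝ) // IsFaceOf τ (coneOf v)}, (↥(Mperp τ.1) →+ ℝ)) :
    (toricBoundaryMap (coneOf v) p) 0 = 0 ∧
      ∀ a b, (toricBoundaryMap (coneOf v) p) (a + b) =
        (toricBoundaryMap (coneOf v) p) a + (toricBoundaryMap (coneOf v) p) b := by
  classical
  obtain ⟨⟨τ, hτf⟩, ℓ⟩ := p
  have hsub : τ ⊆ coneOf v := by
    obtain ⟨w, hw1, hw2⟩ := hτf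
    rw [hw2]
    intro x hx
    exact hx.1
  have hsplit : ∀ a b : ↥(Ssigma (coneOf v)),
      ((a + b : ↥(Ssigma (coneOf v))) : Fin n → ℤ) ∈ Mperp τ →
      ((a : Fin n → ℤ) ∈ Mperp τ ∧ (b : Fin n → ℤ) ∈ Mperp τ) := by
    intro a b hab
    have key : ∀ x ∈ τ, dotIR a.1 x = 0 ∧ dotIR b.1 x = 0 := by
      intro x hx
      have h1 : dotIR (a.1 + b.1) x = 0 := hab x hx
      have h2 : 0 ≤ dotIR a.1 x := a.2 x (hsub hx)
      have h3 : 0 ≤ dotIR b.1 x := b.2 x (hsub hx)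
      have h4 := dotIR_add a.1 b.1 x
      constructor <;> linarith [h4 ▸ h1]
    exact ⟨fun x hx => (key x hx).1, fun x hx => (key x hx).2⟩
  constructor
  · show (if h : ((0 : ↥(Ssigma (coneOf v))) : Fin n → ℤ) ∈ Mperp τ
      then ((ℓ ⟨_, h⟩ : ℝ) : WithTop ℝ) else ⊤) = 0
    have h0 : ((0 : ↥(Ssigma (coneOf v))) : Fin n → ℤ) ∈ Mperp τ := (Mperp τ).zero_mem
    rw [dif_pos h0]
    have : (⟨((0 : ↥(Ssigma (coneOf v))) : Fin n → ℤ), h0⟩ : ↥(Mperp τ)) = 0 :=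
      Subtype.ext rfl
    rw [this, map_zero]
    rfl
  · intro a b
    show (if h : ((a + b : ↥(Ssigma (coneOf v))) : Fin n → ℤ) ∈ Mperp τ
        then ((ℓ ⟨_, h⟩ : ℝ) : WithTop ℝ) else ⊤) = _
    by_cases hab : ((a + b : ↥(Ssigma (coneOf v))) : Fin n → ℤ) ∈ Mperp τ
    · obtain ⟨ha, hb⟩ := hsplit a b hab
      rw [dif_pos hab]
      show _ = (if h : (a : Fin n → ℤ) ∈ Mperp τ
          then ((ℓ ⟨_, h⟩ : ℝ) : WithTop ℝ) else ⊤) +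
        (if h : (b : Fin n → ℤ) ∈ Mperp τ
          then ((ℓ ⟨_, h⟩ : ℝ) : WithTop ℝ) else ⊤)
      rw [dif_pos ha, dif_pos hb, ← WithTop.coe_add]
      have heq : (⟨((a + b : ↥(Ssigma (coneOf v))) : Fin n → ℤ), hab⟩ : ↥(Mperp τ)) =
          ⟨(a : Fin n → ℤ), ha⟩ + ⟨(b : Fin n → ℤ), hb⟩ := Subtype.ext rfl
      rw [heq, map_add]
    · rw [dif_neg hab]
      show (⊤ : WithTop ℝ) = (if h : (a : Fin n → ℤ) ∈ Mperp τ
          then ((ℓ ⟨_, h⟩ : ℝ) : WithTop ℝ) else ⊤) +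
        (if h : (b : Fin n → ℤ) ∈ Mperp τ
          then ((ℓ ⟨_, h⟩ : ℝ) : WithTop ℝ) else ⊤)
      by_cases ha : (a : Fin n → ℤ) ∈ Mperp τ
      · have hb : ¬ (b : Fin n → ℤ) ∈ Mperp τ := by
          intro hb
          exact hab (fun x hx => by
            have h4 := dotIR_add a.1 b.1 x
            show dotIR (a.1 + b.1) x = 0
            rw [h4, ha x hx, hb x hx, add_zero])
        rw [dif_pos ha, dif_neg hb, WithTop.add_top]
      · rw [dif_neg ha, WithTop.top_add]

end Stmt8I
/-- For a strongly convex rational polyhedral cone `σ`, the map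
`(τ, ℓ) ↦ φ_{τ,ℓ}` is a bijection from pairs of a face `τ ⪯ σ` and a group homomorphism
`ℓ : M ∩ τ^⊥ → ℝ` onto the set of monoid homomorphisms `(S_σ, +, 0) → (ℝ ∪ {∞}, +, 0)`. -/
theorem stmt_8 (n : ℕ) (σ : Set (Fin n → ℝ))
    (hσ : IsRatPolyCone σ) (hsc : ∀ x ∈ σ, -x ∈ σ → x = 0) :
    Set.BijOn (toricBoundaryMap σ) Set.univ
      {φ : ↥(Ssigma σ) → WithTop ℝ | φ 0 = 0 ∧ ∀ a b, φ (a + b) = φ a + φ b} := by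
  obtain ⟨k, v, rfl⟩ := hσ
  refine ⟨fun p _ => Stmt8I.maps_main v p,
    fun p _ p' _ hpp => Stmt8I.inj_main v p p' hpp, fun φ hφ => ?_⟩
  obtain ⟨p, hp⟩ := Stmt8S.surj_main v φ hφ.1 hφ.2
  exact ⟨p, Set.mem_univ p, hp⟩
end
end
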